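/- Let G be a pentagraph, let v be a vertex of G, let X be a set of neighbours of v, and let A1 and A2 be distinct components of G∖(X ∪ {v}). Let x and x' be distinct vertices of X, and suppose there is an induced path of G between x and x' of even length all of whose internal vertices lie in A1. Then every induced path of G between x and x' all of whose internal vertices lie in A2 and whose interior is nonempty has even length, and its length is at least four. -/

import Mathlib

open SimpleGraph

variable {V : Type*}

/-- A walk is an *induced (chordless) path* if it is a path and every edge of `G` joining
two of its vertices is an edge of the path. -/
def IsIndPath (G : SimpleGraph V) {u v : V} (p : G.Walk u v) : Prop :=
  p.IsPath ∧ ∀ x ∈ p.support, ∀ y ∈ p.support, G.Adj x y → s(x, y) ∈ p.edges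

/-- The interior (set of internal vertices) of a walk from `u` to `v`. -/
def interiorSet {G : SimpleGraph V} {u v : V} (p : G.Walk u v) : Set V :=
  {x | x ∈ p.support ∧ x ≠ u ∧ x ≠ v}

/-- An *induced cycle*: a cycle such that every edge of `G` joining two of its vertices is an
edge of the cycle. -/
def IsIndCycle (G : SimpleGraph V) {u : V} (c : G.Walk u u) : Prop :=
  c.IsCycle ∧ ∀ x ∈ c.support, ∀ y ∈ c.support, G.Adj x y → s(x, y) ∈ c.edges

/-- A *pentagraph*: every cycle has length at least five, and every induced cycle of odd
length has length exactly five. -/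
def IsPentagraph (G : SimpleGraph V) : Prop :=
  (∀ (u : V) (c : G.Walk u u), c.IsCycle → 5 ≤ c.length) ∧
  (∀ (u : V) (c : G.Walk u u), IsIndCycle G c → Odd c.length → c.length = 5)

/-- Removing the vertex set `X` disconnects `G`: two vertices outside `X` are not joined by
any path avoiding `X`. -/
def RemovalDisconnects (G : SimpleGraph V) (X : Set V) : Prop :=
  ∃ a b : ↥(Xᶜ), ¬ (G.induce Xᶜ).Reachable a b

/-- `G` admits a `P₃`-cutset: an induced three-vertex path whose deletion disconnects `G`. -/
def HasP3Cutset (G : SimpleGraph V) : Prop :=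
  ∃ v₁ v₂ v₃ : V, G.Adj v₁ v₂ ∧ G.Adj v₂ v₃ ∧ ¬ G.Adj v₁ v₃ ∧ v₁ ≠ v₃ ∧
    RemovalDisconnects G ({v₁, v₂, v₃} : Set V)

/-- `A` is (the vertex set of) a connected component of `G ∖ X`. -/
def IsCompOf (G : SimpleGraph V) (X : Set V) (A : Set V) : Prop :=
  A.Nonempty ∧ A ⊆ Xᶜ ∧ (G.induce A).Connected ∧
    ∀ u ∈ A, ∀ w ∈ Xᶜ, G.Adj u w → w ∈ A

/-- `G` admits a strong parity star-cutset. -/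
def HasStrongParityStarCutset (G : SimpleGraph V) : Prop :=
  ∃ X : Set V, RemovalDisconnects G X ∧
    ∃ x ∈ X, (∀ y ∈ X, y ≠ x → G.Adj x y) ∧
      ∃ A : Set V, IsCompOf G X A ∧
        (∀ y ∈ X, y ≠ x → ∀ z ∈ X, z ≠ x → y ≠ z →
          ∃ p : G.Walk y z, IsIndPath G p ∧ Even p.length ∧ interiorSet p ⊆ A) ∧
        (∃ a ∈ A, G.Adj x a)

/-- `G` admits a clique cutset. -/
def HasCliqueCutset (G : SimpleGraph V) : Prop :=
  ∃ X : Set V, G.IsClique X ∧ RemovalDisconnects G X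

/-- Vertices of the Petersen graph: 2-element subsets of a 5-element set. -/
abbrev KVert : Type := {s : Finset (Fin 5) // s.card = 2}

/-- The Petersen graph, as the Kneser graph on 2-element subsets of a 5-element set. -/
def petersen : SimpleGraph KVert where
  Adj a b := Disjoint (a : Finset (Fin 5)) (b : Finset (Fin 5))
  symm := ⟨fun a b h => h.symm⟩
  loopless := ⟨by
    intro a (h : Disjoint (a : Finset (Fin 5)) (a : Finset (Fin 5)))
    rw [disjoint_self] at h
    have h2 := a.2
    simp [h] at h2⟩

def pA : KVert := ⟨{0, 1}, by decide⟩
def pB : KVert := ⟨{2, 3}, by decide⟩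

/-- The Petersen graph minus one edge. -/
def petersen0 : SimpleGraph KVert := petersen.deleteEdges {s(pA, pB)}

/-- The Petersen graph minus one vertex. -/
def petersen1 : SimpleGraph {x : KVert // x ≠ pA} := petersen.induce {x : KVert | x ≠ pA}

/-- The Petersen graph minus two adjacent vertices. -/
def petersen2 : SimpleGraph {x : KVert // x ≠ pA ∧ x ≠ pB} :=
  petersen.induce {x : KVert | x ≠ pA ∧ x ≠ pB}

/-- Two nonadjacent vertices are *linked*: joined by two induced paths, both of length at
least three, of different parity. -/
def Linked (H : SimpleGraph V) (s t : V) : Prop :=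
  ∃ (p q : H.Walk s t), IsIndPath H p ∧ IsIndPath H q ∧
    3 ≤ p.length ∧ 3 ≤ q.length ∧ p.length % 2 ≠ q.length % 2

/-- Two vertices are *odd-linked*: joined by an induced path of odd length at least five. -/
def OddLinked (H : SimpleGraph V) (s t : V) : Prop :=
  ∃ p : H.Walk s t, IsIndPath H p ∧ Odd p.length ∧ 5 ≤ p.length

/-- A *jump* over a hole with vertex set `C`: an induced path whose ends are distinct,
nonadjacent vertices of `C` and whose other vertices avoid `C`. -/
def IsJump (G : SimpleGraph V) (C : Set V) {s t : V} (P : G.Walk s t) : Prop :=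
  IsIndPath G P ∧ s ∈ C ∧ t ∈ C ∧ s ≠ t ∧ ¬ G.Adj s t ∧
    ∀ x ∈ P.support, x ∈ C → x = s ∨ x = t

/-- A jump *across* the vertex `c` of `C`. -/
def IsJumpAcross (G : SimpleGraph V) (C : Set V) {s t : V} (P : G.Walk s t) (c : V) : Prop :=
  IsJump G C P ∧ c ∈ C ∧ G.Adj c s ∧ G.Adj c t

/-- A *local* jump: no vertex of `C` other than `c, s, t` has a neighbour in the interior. -/
def IsLocalJump (G : SimpleGraph V) (C : Set V) {s t : V} (P : G.Walk s t) : Prop :=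
  IsJump G C P ∧ ∃ c : V, c ∈ C ∧ G.Adj c s ∧ G.Adj c t ∧
    ∀ x ∈ C, x ≠ c → x ≠ s → x ≠ t → ∀ y ∈ interiorSet P, ¬ G.Adj x y

/-- A *short* jump: a jump of length three. -/
def IsShortJump (G : SimpleGraph V) (C : Set V) {s t : V} (P : G.Walk s t) : Prop :=
  IsJump G C P ∧ P.length = 3

/-- `G` is three-connected. -/
def ThreeConnected (G : SimpleGraph V) : Prop :=
  4 ≤ Nat.card V ∧ ∀ S : Set V, S.ncard < 3 → (G.induce Sᶜ).Connected

/-! Every vertex of `X` is adjacent to `v` and cycles have length at least five, so a path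
between `x` and `x'` avoiding `v` has length at least three: otherwise it closes up through `v`
into a cycle of length at most four. The paths `p` and `q` meet only in `x` and `x'`, and their
interiors lie in different components of `G ∖ (X ∪ {v})`, so no edge joins them. Hence `p`
followed by `q` reversed is an induced cycle of length `|p| + |q| ≥ 4 + 3 > 5`; it cannot be
odd, so `q` is even, and being of length at least three it has length at least four. -/

namespace SimpleGraph

variable {G : SimpleGraph V}

lemma Walk.mem_support_iff_mem_interiorSet {u v w : V} (p : G.Walk u v) :
    w ∈ p.support ↔ w = u ∨ w = v ∨ w ∈ interiorSet p := by
  by_cases hu : w = u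
  · simp [hu]
  by_cases hv : w = v
  · simp [hv]
  simp [interiorSet, hu, hv]

lemma Walk.interiorSet_reverse {u v : V} (p : G.Walk u v) :
    interiorSet p.reverse = interiorSet p := by
  ext w
  simp only [interiorSet, Set.mem_ofPred_eq, support_reverse, List.mem_reverse]
  tauto

lemma Walk.IsPath.ne_of_interiorSet_nonempty {u v : V} {p : G.Walk u v} (hp : p.IsPath)
    (h : (interiorSet p).Nonempty) : u ≠ v := by
  rintro rfl
  obtain ⟨w, hw, hwu, -⟩ := h
  simp [isPath_iff_nil.mp hp |>.eq_nil, hwu] at hw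

lemma Walk.IsPath.ne_of_mem_support_tail {u v w : V} {p : G.Walk u v} (hp : p.IsPath)
    (hw : w ∈ p.support.tail) : w ≠ u := by
  have hnodup := hp.support_nodup
  rw [← p.cons_tail_support, List.nodup_cons] at hnodup
  exact fun h => hnodup.1 (h ▸ hw)

lemma three_le_length_of_adj_of_adj (hG : 5 ≤ G.egirth) {v x x' : V} (hvx : G.Adj v x)
    (hvx' : G.Adj v x') (hxx' : x ≠ x') {r : G.Walk x x'} (hr : r.IsPath)
    (hv : v ∉ r.support) : 3 ≤ r.length := by
  have hcycle : (Walk.cons hvx (r.concat hvx'.symm)).IsCycle := by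
    refine (Walk.cons_isCycle_iff _ _).mpr ⟨hr.concat hv _, ?_⟩
    rw [Walk.edges_concat, List.concat_eq_append, List.mem_append, List.mem_singleton]
    rintro (he | he)
    · exact hv (r.fst_mem_support_of_mem_edges he)
    · rcases Sym2.eq_iff.mp he with ⟨h, -⟩ | ⟨-, h⟩
      exacts [hvx'.ne h, hxx' h]
  have h5 := le_egirth.mp hG v _ hcycle
  simp only [Walk.length_cons, Walk.length_concat] at h5
  norm_cast at h5
  omega

lemma isIndCycle_append_reverse {x x' : V} {p q : G.Walk x x'} (hp : IsIndPath G p)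
    (hq : IsIndPath G q) (hp₂ : 1 < p.length)
    (hdisj : Disjoint (interiorSet p) (interiorSet q))
    (hnadj : ∀ a ∈ interiorSet p, ∀ b ∈ interiorSet q, ¬ G.Adj a b) :
    IsIndCycle G (p.append q.reverse) := by
  refine ⟨hp.1.isCycle_append hq.1.reverse (fun w hwp hwq => ?_) (Or.inl hp₂), ?_⟩
  · have hwx := hp.1.ne_of_mem_support_tail hwp
    have hwx' := hq.1.reverse.ne_of_mem_support_tail hwq
    have hwq' : w ∈ interiorSet q.reverse := ⟨List.mem_of_mem_tail hwq, hwx', hwx⟩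
    rw [Walk.interiorSet_reverse] at hwq'
    exact Set.disjoint_left.mp hdisj ⟨List.mem_of_mem_tail hwp, hwx, hwx'⟩ hwq'
  have across : ∀ a ∈ p.support, ∀ b ∈ q.support, G.Adj a b →
      s(a, b) ∈ p.edges ∨ s(a, b) ∈ q.edges := by
    intro a ha b hb hab
    by_cases hbp : b ∈ p.support
    · exact .inl (hp.2 a ha b hbp hab)
    by_cases haq : a ∈ q.support
    · exact .inr (hq.2 a haq b hb hab)
    have ha' : a ∈ interiorSet p :=
      ⟨ha, fun h => haq (h ▸ q.start_mem_support), fun h => haq (h ▸ q.end_mem_support)⟩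
    have hb' : b ∈ interiorSet q :=
      ⟨hb, fun h => hbp (h ▸ p.start_mem_support), fun h => hbp (h ▸ p.end_mem_support)⟩
    exact (hnadj a ha' b hb' hab).elim
  intro a ha b hb hab
  simp only [Walk.mem_support_append_iff, Walk.support_reverse, List.mem_reverse] at ha hb
  simp only [Walk.edges_append, Walk.edges_reverse, List.mem_append, List.mem_reverse]
  rcases ha with ha | ha <;> rcases hb with hb | hb
  · exact .inl (hp.2 a ha b hb hab)
  · exact across a ha b hb hab
  · simpa only [Sym2.eq_swap] using across b hb a ha hab.symm
  · exact .inr (hq.2 a ha b hb hab)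

lemma IsPentagraph.five_le_egirth (hG : IsPentagraph G) : 5 ≤ G.egirth :=
  le_egirth.mpr fun u c hc => by exact_mod_cast hG.1 u c hc

namespace IsCompOf

variable {X A B : Set V}

lemma subset_of_mem (hA : IsCompOf G X A) (hB : IsCompOf G X B) {w : V} (hwA : w ∈ A)
    (hwB : w ∈ B) : A ⊆ B := by
  have walk_mem : ∀ (a b : A) (r : (G.induce A).Walk a b), (a : V) ∈ B → (b : V) ∈ B := by
    intro a b r
    induction r with
    | nil => exact id
    | cons hadj _ ih => exact fun ha => ih (hB.2.2.2 _ ha _ (hA.2.1 (Subtype.prop _)) hadj)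
  intro u hu
  obtain ⟨r⟩ := hA.2.2.1.preconnected ⟨w, hwA⟩ ⟨u, hu⟩
  exact walk_mem _ _ r hwB

lemma disjoint (hA : IsCompOf G X A) (hB : IsCompOf G X B) (hAB : A ≠ B) : Disjoint A B :=
  Set.disjoint_left.mpr fun _ hwA hwB =>
    hAB ((hA.subset_of_mem hB hwA hwB).antisymm (hB.subset_of_mem hA hwB hwA))

lemma not_adj (hA : IsCompOf G X A) (hB : IsCompOf G X B) (hAB : A ≠ B) {a b : V}
    (ha : a ∈ A) (hb : b ∈ B) : ¬ G.Adj a b := fun hab =>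
  Set.disjoint_left.mp (hA.disjoint hB hAB) (hA.2.2.2 a ha b (hB.2.1 hb) hab) hb

end IsCompOf

end SimpleGraph

theorem pentagraph_component_path_parity_general {V : Type*} (G : SimpleGraph V)
    (hG : IsPentagraph G) (v : V) (X : Set V) (hX : ∀ x ∈ X, G.Adj v x)
    (A₁ A₂ : Set V) (hA₁ : IsCompOf G (X ∪ {v}) A₁) (hA₂ : IsCompOf G (X ∪ {v}) A₂)
    (hA : A₁ ≠ A₂)
    (x x' : V) (hx : x ∈ X) (hx' : x' ∈ X)
    (p : G.Walk x x') (hp : IsIndPath G p) (hpeven : Even p.length)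
    (hpint : interiorSet p ⊆ A₁) :
    ∀ q : G.Walk x x', IsIndPath G q → interiorSet q ⊆ A₂ → (interiorSet q).Nonempty →
      Even q.length ∧ 4 ≤ q.length := by
  intro q hq hqint hqne
  have hxx' : x ≠ x' := hq.1.ne_of_interiorSet_nonempty hqne
  have three_le : ∀ {A : Set V}, IsCompOf G (X ∪ {v}) A → ∀ r : G.Walk x x', r.IsPath →
      interiorSet r ⊆ A → 3 ≤ r.length := by
    intro A hA r hr hrA
    refine three_le_length_of_adj_of_adj hG.five_le_egirth (hX x hx) (hX x' hx') hxx' hr ?_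
    rw [r.mem_support_iff_mem_interiorSet]
    rintro (h | h | h)
    exacts [(hX x hx).ne h, (hX x' hx').ne h, hA.2.1 (hrA h) (Or.inr rfl)]
  have hp3 := three_le hA₁ p hp.1 hpint
  have hq3 := three_le hA₂ q hq.1 hqint
  have hcycle : IsIndCycle G (p.append q.reverse) :=
    isIndCycle_append_reverse hp hq (by omega) ((hA₁.disjoint hA₂ hA).mono hpint hqint)
      fun a ha b hb => hA₁.not_adj hA₂ hA (hpint ha) (hqint hb)
  have hlen : (p.append q.reverse).length = p.length + q.length := by simp
  have hqeven : Even q.length := by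
    by_contra hqodd
    have h5 := hG.2 x _ hcycle (hlen ▸ hpeven.add_odd (Nat.not_even_iff_odd.mp hqodd))
    obtain ⟨k, hk⟩ := hpeven
    omega
  exact ⟨hqeven, by obtain ⟨k, hk⟩ := hqeven; omega⟩

/-- parity of induced paths between two vertices of `X` through different
components of `G ∖ (X ∪ {v})` in a pentagraph. -/
theorem pentagraph_component_path_parity {V : Type*} [Fintype V] (G : SimpleGraph V)
    (hG : IsPentagraph G) (v : V) (X : Set V) (hX : ∀ x ∈ X, G.Adj v x)
    (A₁ A₂ : Set V) (hA₁ : IsCompOf G (X ∪ {v}) A₁) (hA₂ : IsCompOf G (X ∪ {v}) A₂)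
    (hA : A₁ ≠ A₂)
    (x x' : V) (hx : x ∈ X) (hx' : x' ∈ X) (hxx' : x ≠ x')
    (p : G.Walk x x') (hp : IsIndPath G p) (hpeven : Even p.length)
    (hpint : interiorSet p ⊆ A₁) :
    ∀ q : G.Walk x x', IsIndPath G q → interiorSet q ⊆ A₂ → (interiorSet q).Nonempty →
      Even q.length ∧ 4 ≤ q.length :=
  pentagraph_component_path_parity_general G hG v X hX A₁ A₂ hA₁ hA₂ hA x x' hx hx' p hp hpeven
    hpint
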